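/- Let A be an algebra with a term t Mal'cev modulo F and G. Then for all reflexive admissible relations R, S on A: R + S ⊆ (F(R) + F(S)) ∘ cl(R ∪ S) ∘ (G(R) + G(S)) ⊆ (F(R) + F(S)) ∘ R ∘ S ∘ (G(R) + G(S)), where R + S = ⋃ₙ R ∘ₙ S is the join (union of all finite alternating compositions). -/

import Mathlib

structure Signature where
  symbols : Type
  arity : symbols → ℕ

structure UAAlgebra (σ : Signature) where
  carrier : Type
  ops : ∀ s, (Fin (σ.arity s) → carrier) → carrier

namespace Paper

variable {σ : Signature}

/-- Binary relations on the carrier of an algebra. -/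
abbrev Rel (A : UAAlgebra σ) := A.carrier → A.carrier → Prop

/-- A relation is admissible (compatible) if it is preserved by all operations,
i.e. it is a subalgebra of `A × A`. -/
def Compatible (A : UAAlgebra σ) (R : Rel A) : Prop :=
  ∀ s (f g : Fin (σ.arity s) → A.carrier),
    (∀ j, R (f j) (g j)) → R (A.ops s f) (A.ops s g)

/-- Reflexive and admissible. -/
def RAdm (A : UAAlgebra σ) (R : Rel A) : Prop :=
  Reflexive R ∧ Compatible A R

/-- Relational composition. -/
def comp {A : UAAlgebra σ} (R S : Rel A) : Rel A :=
  fun a c => ∃ b, R a b ∧ S b c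

/-- `cl A X` : the least compatible relation containing `X`. -/
def cl (A : UAAlgebra σ) (X : Rel A) : Rel A :=
  fun a b => ∀ S : Rel A, Compatible A S → (∀ x y, X x y → S x y) → S a b

/-- The least reflexive compatible relation containing `X`. -/
def clRefl (A : UAAlgebra σ) (X : Rel A) : Rel A :=
  fun a b => ∀ S : Rel A, Reflexive S → Compatible A S → (∀ x y, X x y → S x y) → S a b

/-- `altComp R S n` is `R ∘ₙ S`, the alternating composition
`R ∘ S ∘ R ∘ ⋯` with `n` factors (`n - 1` occurrences of `∘`);
by convention `R ∘₀ S` is the identity relation. -/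
def altComp {A : UAAlgebra σ} (R S : Rel A) : ℕ → Rel A
  | 0 => Eq
  | n + 1 => comp R (altComp S R n)

/-- `relPow R n = Rⁿ`, with `R⁰` the identity relation. -/
def relPow {A : UAAlgebra σ} (R : Rel A) : ℕ → Rel A
  | 0 => Eq
  | n + 1 => comp R (relPow R n)

/-- The join `R + S = ⋃ₙ R ∘ₙ S`. -/
def join {A : UAAlgebra σ} (R S : Rel A) : Rel A :=
  fun a b => ∃ n, altComp R S n a b

/-- Converse relation `R⁻`. -/
def conv {A : UAAlgebra σ} (R : Rel A) : Rel A :=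
  fun a b => R b a

/-- Composition of a finite list of relations (empty list gives the identity). -/
def compList {A : UAAlgebra σ} : List (Rel A) → Rel A
  | [] => Eq
  | r :: l => comp r (compList l)

/-- Join of a family of relations: the union of all finite compositions of members. -/
def joinFam {A : UAAlgebra σ} {ι : Type} (R : ι → Rel A) : Rel A :=
  fun a b => ∃ l : List ι, compList (l.map R) a b

/-- The smallest congruence containing `X`. -/
def cg (A : UAAlgebra σ) (X : Rel A) : Rel A :=
  fun a b => ∀ S : Rel A, Equivalence S → Compatible A S →
    (∀ x y, X x y → S x y) → S a b

/-- Terms of the signature `σ` in `n` variables. -/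
inductive Term (σ : Signature) (n : ℕ) : Type
  | var : Fin n → Term σ n
  | op : ∀ s, (Fin (σ.arity s) → Term σ n) → Term σ n

/-- Evaluation of a term in an algebra under an environment. -/
def Term.eval {n : ℕ} (A : UAAlgebra σ) (env : Fin n → A.carrier) : Term σ n → A.carrier
  | .var k => env k
  | .op s args => A.ops s fun j => (args j).eval A env

/-- The ternary term operation induced by a ternary term. -/
def tApp (A : UAAlgebra σ) (t : Term σ 3) (a b c : A.carrier) : A.carrier :=
  t.eval A ![a, b, c]

/-- `t` is Mal'cev modulo `F` and `G`: whenever `a R b` with `R` reflexive admissible,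
`a F(R) t(a,b,b)` and `t(a,a,b) G(R) b`. -/
def MalcevMod (A : UAAlgebra σ) (F G : Rel A → Rel A) (t : Term σ 3) : Prop :=
  ∀ R : Rel A, RAdm A R → ∀ a b : A.carrier, R a b →
    F R a (tApp A t a b b) ∧ G R (tApp A t a a b) b

end Paper

/-!
Put `Φ = F(R) + F(S)`, `Γ = G(R) + G(S)` and `Q = Φ ∘ cl(R ∪ S) ∘ Γ`. Then `Q` is reflexive and
compatible, and it absorbs `F(R)`, `F(S)` on the left and `G(R)`, `G(S)` on the right. For a chain
`a₀ X₀ a₁ X₁ ⋯ aₙ` with every `Xᵢ ∈ {R, S}` one proves `a_f Q a_g` for `f ≤ g` by induction on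
`g - f`: for `g ≥ f + 2` the Mal'cev property gives `a_f F(X_f) t(a_f, a_{f+1}, a_{f+1})` and
`t(a_{g-1}, a_{g-1}, a_g) G(X_{g-1}) a_g`, and the two middle elements are `Q`-related because their
arguments are, coordinatewise, pairs of smaller gap. The second inclusion holds because `R ∘ S` is
compatible and contains `R ∪ S`.
-/

namespace Paper

variable {σ : Signature} {A : UAAlgebra σ}

theorem compatible_eq : Compatible A Eq := by
  intro s f g h
  rw [funext h]

theorem Compatible.comp {R S : Rel A} (hR : Compatible A R) (hS : Compatible A S) :
    Compatible A (Paper.comp R S) := by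
  intro s f g h
  choose b hfb hbg using h
  exact ⟨A.ops s b, hR s f b hfb, hS s b g hbg⟩

theorem Compatible.altComp {R S : Rel A} (hR : Compatible A R) (hS : Compatible A S) (n : ℕ) :
    Compatible A (Paper.altComp R S n) := by
  induction n generalizing R S with
  | zero => exact compatible_eq
  | succ n ih => exact hR.comp (ih hS hR)

theorem Compatible.term_eval {K : Rel A} (hK : Compatible A K) {k : ℕ} (u : Term σ k)
    {e₁ e₂ : Fin k → A.carrier} (h : ∀ i, K (e₁ i) (e₂ i)) :
    K (u.eval A e₁) (u.eval A e₂) := by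
  induction u with
  | var i => exact h i
  | op s args ih => exact hK s _ _ ih

theorem Compatible.tApp {K : Rel A} (hK : Compatible A K) (t : Term σ 3)
    {a b c a' b' c' : A.carrier} (ha : K a a') (hb : K b b') (hc : K c c') :
    K (Paper.tApp A t a b c) (Paper.tApp A t a' b' c') :=
  hK.term_eval t fun i => by fin_cases i <;> assumption

section Join

variable {R S : Rel A} {a b c : A.carrier}

theorem altComp_succ_of_altComp (hR : Reflexive R) (hS : Reflexive S) {n : ℕ}
    (h : altComp R S n a b) : altComp R S (n + 1) a b := by
  induction n generalizing R S a with
  | zero => cases h; exact ⟨_, hR _, rfl⟩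
  | succ n ih =>
    obtain ⟨c, hac, hcb⟩ := h
    exact ⟨c, hac, ih hS hR hcb⟩

theorem altComp_mono (hR : Reflexive R) (hS : Reflexive S) {m n : ℕ} (hmn : m ≤ n)
    (h : altComp R S m a b) : altComp R S n a b := by
  induction hmn with
  | refl => exact h
  | step _ ih => exact altComp_succ_of_altComp hR hS ih

theorem altComp_two_mul_add {k m : ℕ} (hab : altComp R S (2 * k) a b)
    (hbc : altComp R S m b c) : altComp R S (2 * k + m) a c := by
  induction k generalizing a with
  | zero => cases hab; simpa using hbc
  | succ k ih =>
    obtain ⟨x, hax, y, hxy, hyb⟩ := hab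
    rw [show 2 * (k + 1) + m = 2 * k + m + 1 + 1 by ring]
    exact ⟨x, hax, y, hxy, ih hyb⟩

theorem join_refl (x : A.carrier) : join R S x x := ⟨0, rfl⟩

theorem join_trans (hR : Reflexive R) (hS : Reflexive S) (hab : join R S a b)
    (hbc : join R S b c) : join R S a c := by
  obtain ⟨n, hn⟩ := hab
  obtain ⟨m, hm⟩ := hbc
  exact ⟨2 * n + m, altComp_two_mul_add (altComp_mono hR hS (by omega) hn) hm⟩

theorem join_of_eq_or {X : Rel A} (hR : Reflexive R) (hX : X = R ∨ X = S) (h : X a b) :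
    join R S a b := by
  rcases hX with rfl | rfl
  · exact ⟨1, b, h, rfl⟩
  · exact ⟨2, a, hR a, b, h, rfl⟩

theorem compatible_join (hR : RAdm A R) (hS : RAdm A S) : Compatible A (join R S) := by
  intro s f g h
  choose n hn using h
  exact ⟨Finset.univ.sup n, hR.2.altComp hS.2 _ s f g fun j =>
    altComp_mono hR.1 hS.1 (Finset.le_sup (Finset.mem_univ j)) (hn j)⟩

theorem exists_chain_of_altComp (hR : Reflexive R) (hS : Reflexive S) {n : ℕ}
    (h : altComp R S n a c) :
    ∃ (Rs : ℕ → Rel A) (av : ℕ → A.carrier), (∀ i, Rs i = R ∨ Rs i = S) ∧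
      (∀ i, Rs i (av i) (av (i + 1))) ∧ av 0 = a ∧ av n = c := by
  induction n generalizing R S a with
  | zero =>
    exact ⟨fun _ => R, fun _ => a, fun _ => Or.inl rfl, fun _ => hR a, rfl, h⟩
  | succ n ih =>
    obtain ⟨b, hab, hbc⟩ := h
    obtain ⟨Rs, av, hRs, hav, rfl, rfl⟩ := ih hS hR hbc
    refine ⟨fun | 0 => R | i + 1 => Rs i, fun | 0 => a | i + 1 => av i, ?_, ?_, rfl, rfl⟩
    · rintro (_ | i)
      exacts [Or.inl rfl, (hRs i).symm]
    · rintro (_ | i)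
      exacts [hab, hav i]

end Join

theorem cl_compatible (X : Rel A) : Compatible A (cl A X) :=
  fun s f g h K hK hX => hK s f g fun j => h j K hK hX

theorem cl_of_rel {X : Rel A} {a b : A.carrier} (h : X a b) : cl A X a b :=
  fun _ _ hX => hX a b h

variable {F G : Rel A → Rel A} {t : Term σ 3}

theorem MalcevMod.rel_of_chain (ht : MalcevMod A F G t) {Q : Rel A} (hQr : Reflexive Q)
    (hQc : Compatible A Q) {Rs : ℕ → Rel A} {av : ℕ → A.carrier} (hRs : ∀ i, RAdm A (Rs i))
    (hav : ∀ i, Rs i (av i) (av (i + 1))) (hQ : ∀ i, Q (av i) (av (i + 1)))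
    (hFQ : ∀ i x y z, F (Rs i) x y → Q y z → Q x z)
    (hQG : ∀ i x y z, Q x y → G (Rs i) y z → Q x z) (d f : ℕ) :
    Q (av f) (av (f + d)) := by
  induction d using Nat.strong_induction_on generalizing f with
  | _ d ih =>
  match d with
  | 0 => exact hQr _
  | 1 => exact hQ f
  | d + 2 =>
    have middle : Q (tApp A t (av f) (av (f + 1)) (av (f + 1)))
        (tApp A t (av (f + d + 1)) (av (f + d + 1)) (av (f + (d + 2)))) := by
      refine hQc.tApp t (ih (d + 1) (by omega) f) ?_ ?_
      · simpa only [Nat.add_right_comm] using ih d (by omega) (f + 1)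
      · simpa only [show f + 1 + (d + 1) = f + (d + 2) by omega] using
          ih (d + 1) (by omega) (f + 1)
    exact hFQ f _ _ _ (ht _ (hRs f) _ _ (hav f)).1
      (hQG (f + d + 1) _ _ _ middle (ht _ (hRs _) _ _ (hav _)).2)

theorem MalcevMod.join_le_comp_cl_comp (ht : MalcevMod A F G t)
    (hF : ∀ R, RAdm A R → RAdm A (F R)) (hG : ∀ R, RAdm A R → RAdm A (G R))
    {R S : Rel A} (hR : RAdm A R) (hS : RAdm A S) {a c : A.carrier} (h : join R S a c) :
    comp (join (F R) (F S)) (comp (cl A (fun u v => R u v ∨ S u v)) (join (G R) (G S))) a c := by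
  obtain ⟨n, hn⟩ := h
  obtain ⟨Rs, av, hRs, hav, rfl, rfl⟩ := exists_chain_of_altComp hR.1 hS.1 hn
  have hFR := hF R hR
  have hFS := hF S hS
  have hGR := hG R hR
  have hGS := hG S hS
  have hRsAdm : ∀ i, RAdm A (Rs i) := fun i => by
    rcases hRs i with h | h <;> rw [h] <;> assumption
  have hcl : ∀ i, cl A (fun u v => R u v ∨ S u v) (av i) (av (i + 1)) := by
    intro i
    apply cl_of_rel
    rcases hRs i with h | h
    · exact Or.inl (h ▸ hav i)
    · exact Or.inr (h ▸ hav i)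
  have hΦ : ∀ i x y, F (Rs i) x y → join (F R) (F S) x y := fun i x y =>
    join_of_eq_or hFR.1 ((hRs i).imp (congrArg F) (congrArg F))
  have hΓ : ∀ i x y, G (Rs i) x y → join (G R) (G S) x y := fun i x y =>
    join_of_eq_or hGR.1 ((hRs i).imp (congrArg G) (congrArg G))
  simpa only [Nat.zero_add] using ht.rel_of_chain
    (Q := comp (join (F R) (F S)) (comp (cl A _) (join (G R) (G S))))
    (fun x => ⟨x, join_refl x, x, cl_of_rel (Or.inl (hR.1 x)), join_refl x⟩)
    ((compatible_join hFR hFS).comp ((cl_compatible _).comp (compatible_join hGR hGS)))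
    hRsAdm hav (fun i => ⟨_, join_refl _, _, hcl i, join_refl _⟩)
    (fun i x y z hxy ⟨w, hyw, hwz⟩ => ⟨w, join_trans hFR.1 hFS.1 (hΦ i x y hxy) hyw, hwz⟩)
    (fun i x y z ⟨w, hxw, v, hwv, hvy⟩ hyz =>
      ⟨w, hxw, v, hwv, join_trans hGR.1 hGS.1 hvy (hΓ i y z hyz)⟩) n 0

theorem cl_le_comp {R S : Rel A} (hR : RAdm A R) (hS : RAdm A S) {a b : A.carrier}
    (h : cl A (fun u v => R u v ∨ S u v) a b) : comp R S a b :=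
  h _ (hR.2.comp hS.2) fun u v huv =>
    huv.elim (fun h => ⟨v, h, hS.1 v⟩) (fun h => ⟨u, hR.1 u, h⟩)

end Paper

open Paper

/-- Theorem 1(v):
`R + S ⊆ (F(R)+F(S)) ∘ cl(R ∪ S) ∘ (G(R)+G(S)) ⊆ (F(R)+F(S)) ∘ R ∘ S ∘ (G(R)+G(S))`. -/
theorem stmt4 {σ : Signature} (A : UAAlgebra σ) (F G : Rel A → Rel A)
    (hF : ∀ R, RAdm A R → RAdm A (F R)) (hG : ∀ R, RAdm A R → RAdm A (G R))
    (t : Term σ 3) (ht : MalcevMod A F G t)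
    (R S : Rel A) (hR : RAdm A R) (hS : RAdm A S) :
    (∀ a c, join R S a c →
        comp (join (F R) (F S))
          (comp (cl A (fun u v => R u v ∨ S u v)) (join (G R) (G S))) a c) ∧
    (∀ a c, comp (join (F R) (F S))
          (comp (cl A (fun u v => R u v ∨ S u v)) (join (G R) (G S))) a c →
        comp (join (F R) (F S)) (comp R (comp S (join (G R) (G S)))) a c) := by
  refine ⟨fun a c h => ht.join_le_comp_cl_comp hF hG hR hS h, ?_⟩
  rintro a c ⟨x, hax, y, hxy, hyc⟩
  obtain ⟨m, hxm, hmy⟩ := cl_le_comp hR hS hxy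
  exact ⟨x, hax, m, hxm, y, hmy, hyc⟩
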